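/- arXiv:0812.1716 — 3 statements merged into one kernel-verified Lean document; each statement's English description precedes it below -/
import Mathlib

section
/- For every i ∈ I, the automorphism T_i of 𝒫 maps the subgroup 𝒬 into itself: T_i(𝒬) ⊆ 𝒬. In particular, for all j ∈ I and a ∈ ℂˣ, T_i(α_{j,a}) lies in the subgroup generated by the elements α_{k,b} (k ∈ I, b ∈ ℂˣ). -/
open Finsupp

/-- The ℓ-weight lattice 𝒫: the free abelian group (written additively) on
generators `π_{i,a}` for `i ∈ I`, `a ∈ ℂˣ`, realized as finitely supported
functions `I × ℂˣ → ℤ`. -/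
abbrev LWeightLattice (I : Type*) := (I × ℂˣ) →₀ ℤ

/-- The generator `π_{i,a}` of 𝒫. -/
noncomputable def piGen {I : Type*} (i : I) (a : ℂˣ) : LWeightLattice I :=
  Finsupp.single (i, a) 1

/-- The image of the generator `π_{j,a}` (given as the pair `p = (j,a)`) under `T_i`. -/
noncomputable def TGen {I : Type*} [Fintype I] [DecidableEq I]
    (A : I → I → ℤ) (d : I → ℕ) (q : ℂˣ) (i : I) (p : I × ℂˣ) : LWeightLattice I :=
  if p.1 = i then
    -piGen i (p.2 * (q ^ d i) ^ 2)
      + ∑ j ∈ Finset.univ.filter (fun j => A j i = -1), piGen j (p.2 * q ^ d i)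
      + ∑ j ∈ Finset.univ.filter (fun j => A j i = -2),
          (piGen j (p.2 * q) + piGen j (p.2 * q ^ 3))
      + ∑ j ∈ Finset.univ.filter (fun j => A j i = -3),
          (piGen j (p.2 * q) + piGen j (p.2 * q ^ 3) + piGen j (p.2 * q ^ 5))
  else piGen p.1 p.2

/-- The endomorphism `T_i` of 𝒫, the unique group endomorphism extending `TGen`. -/
noncomputable def TEnd {I : Type*} [Fintype I] [DecidableEq I]
    (A : I → I → ℤ) (d : I → ℕ) (q : ℂˣ) (i : I) : AddMonoid.End (LWeightLattice I) :=
  Finsupp.liftAddHom fun p => zmultiplesHom _ (TGen A d q i p)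

/-- The ℓ-root `α_{i,a} := (T_i π_{i,a})⁻¹ · π_{i,a}`, written additively. -/
noncomputable def lroot {I : Type*} [Fintype I] [DecidableEq I]
    (A : I → I → ℤ) (d : I → ℕ) (q : ℂˣ) (i : I) (a : ℂˣ) : LWeightLattice I :=
  piGen i a - TEnd A d q i (piGen i a)

/-!
`T_i` moves every generator `π_{j,a}` by an element of `𝒬`: it fixes `π_{j,a}` for `j ≠ i`,
and `T_i π_{i,a} = π_{i,a} - α_{i,a}` by the very definition of `α_{i,a}`. Hence `T_i x - x ∈ 𝒬`
for every `x ∈ 𝒫`, and so `T_i x = (T_i x - x) + x ∈ 𝒬` whenever `x ∈ 𝒬`.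
-/

theorem Finsupp.map_mem_of_forall_single_one_mem {α M : Type*} [AddCommGroup M]
    (f : (α →₀ ℤ) →+ M) (Q : AddSubgroup M) (h : ∀ p, f (single p 1) ∈ Q) (x : α →₀ ℤ) :
    f x ∈ Q := by
  induction x using Finsupp.induction_linear with
  | zero => simp
  | add x y hx hy => simpa only [map_add] using Q.add_mem hx hy
  | single p n =>
    rw [← smul_single_one, map_zsmul]
    exact Q.zsmul_mem (h p) n

theorem AddSubgroup.map_mem_of_forall_sub_mem {M : Type*} [AddGroup M] (f : M →+ M)
    (Q : AddSubgroup M) (h : ∀ x, f x - x ∈ Q) {x : M} (hx : x ∈ Q) : f x ∈ Q := by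
  simpa using Q.add_mem (h x) hx

section

variable {I : Type*} [Fintype I] [DecidableEq I] (A : I → I → ℤ) (d : I → ℕ) (q : ℂˣ)

/-- The ℓ-root lattice `𝒬`. -/
noncomputable abbrev lrootLattice : AddSubgroup (LWeightLattice I) :=
  AddSubgroup.closure (Set.range fun p : I × ℂˣ => lroot A d q p.1 p.2)

theorem lroot_mem_lrootLattice (j : I) (a : ℂˣ) : lroot A d q j a ∈ lrootLattice A d q :=
  AddSubgroup.subset_closure ⟨(j, a), rfl⟩

theorem TEnd_single_one (i : I) (p : I × ℂˣ) :
    TEnd A d q i (single p 1) = TGen A d q i p :=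
  (liftAddHom_apply_single (fun p => zmultiplesHom _ (TGen A d q i p)) p 1).trans
    (one_zsmul _)

theorem TEnd_piGen_of_ne {i j : I} (h : j ≠ i) (a : ℂˣ) :
    TEnd A d q i (piGen j a) = piGen j a := by
  simp [piGen, TEnd_single_one, TGen, h]

theorem TEnd_piGen_self_sub (i : I) (a : ℂˣ) :
    TEnd A d q i (piGen i a) - piGen i a = -lroot A d q i a := by
  rw [lroot, neg_sub]

theorem TEnd_sub_self_mem_lrootLattice (i : I) (x : LWeightLattice I) :
    TEnd A d q i x - x ∈ lrootLattice A d q := by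
  refine Finsupp.map_mem_of_forall_single_one_mem (TEnd A d q i - 1) _ (fun ⟨j, a⟩ => ?_) x
  change TEnd A d q i (piGen j a) - piGen j a ∈ _
  obtain rfl | h := eq_or_ne j i
  · rw [TEnd_piGen_self_sub]
    exact neg_mem (lroot_mem_lrootLattice A d q j a)
  · simp [TEnd_piGen_of_ne A d q h]

end

theorem TEnd_maps_lroot_lattice_general
    {I : Type*} [Fintype I] [DecidableEq I]
    (q : ℂˣ)
    (A : I → I → ℤ) (d : I → ℕ)
    (i : I) :
    (∀ x ∈ AddSubgroup.closure
        (Set.range fun p : I × ℂˣ => lroot A d q p.1 p.2),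
      TEnd A d q i x ∈ AddSubgroup.closure
        (Set.range fun p : I × ℂˣ => lroot A d q p.1 p.2)) ∧
    (∀ (j : I) (a : ℂˣ),
      TEnd A d q i (lroot A d q j a) ∈ AddSubgroup.closure
        (Set.range fun p : I × ℂˣ => lroot A d q p.1 p.2)) := by
  have maps_lattice : ∀ x ∈ lrootLattice A d q, TEnd A d q i x ∈ lrootLattice A d q :=
    fun _ => AddSubgroup.map_mem_of_forall_sub_mem _ _ (TEnd_sub_self_mem_lrootLattice A d q i)
  exact ⟨maps_lattice, fun j a => maps_lattice _ (lroot_mem_lrootLattice A d q j a)⟩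

/-- `T_i` maps the ℓ-root lattice 𝒬 (the subgroup generated by the
`α_{j,a}`) into itself; in particular each `T_i(α_{j,a})` lies in 𝒬. -/
theorem TEnd_maps_lroot_lattice
    {I : Type*} [Fintype I] [DecidableEq I]
    (q : ℂˣ) (hq : ∀ n : ℕ, 1 ≤ n → q ^ n ≠ 1)
    (A : I → I → ℤ) (d : I → ℕ)
    (hAdiag : ∀ i, A i i = 2)
    (hAoff : ∀ i j, i ≠ j → A i j ∈ ({0, -1, -2, -3} : Set ℤ))
    (hAzero : ∀ i j, A i j = 0 ↔ A j i = 0)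
    (hAprod : ∀ i j, i ≠ j → A i j * A j i ≤ 3)
    (hd : ∀ i, 0 < d i)
    (hsym : ∀ i j, (d i : ℤ) * A i j = (d j : ℤ) * A j i)
    (i : I) :
    (∀ x ∈ AddSubgroup.closure
        (Set.range fun p : I × ℂˣ => lroot A d q p.1 p.2),
      TEnd A d q i x ∈ AddSubgroup.closure
        (Set.range fun p : I × ℂˣ => lroot A d q p.1 p.2)) ∧
    (∀ (j : I) (a : ℂˣ),
      TEnd A d q i (lroot A d q j a) ∈ AddSubgroup.closure
        (Set.range fun p : I × ℂˣ => lroot A d q p.1 p.2)) :=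
  TEnd_maps_lroot_lattice_general q A d i
end

section
/- (Rank two, type B₂, second chain.) For all a ∈ ℂˣ: T₁(α_{2,a}) = α_{2,a}·α_{1,aq}, T₂(T₁(α_{2,a})) = α_{2,aq⁴}·α_{1,aq}, and T₁(T₂(T₁(α_{2,a}))) = α_{2,aq⁴}. -/
open Finsupp

/-- The Cartan matrix of type B₂, with `α₁` the long simple root and `α₂` the
short one: `a₁₂ = −1`, `a₂₁ = −2`.  (Index `1` is `0 : Fin 2`, index `2` is
`1 : Fin 2`.) -/
def cartanB2 : Fin 2 → Fin 2 → ℤ := ![![2, -1], ![-2, 2]] 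

/-- The symmetrizing integers `d₁ = 2`, `d₂ = 1` for type B₂. -/
def dB2 : Fin 2 → ℕ := ![2, 1]

lemma TEnd_piGen {I : Type*} [Fintype I] [DecidableEq I]
    (A : I → I → ℤ) (d : I → ℕ) (q : ℂˣ) (i j : I) (a : ℂˣ) :
    TEnd A d q i (piGen j a) = TGen A d q i (j, a) := by
  show Finsupp.liftAddHom _ (Finsupp.single (j,a) 1) = _
  rw [Finsupp.liftAddHom_apply_single]
  simp

lemma T0_pi0 (q a : ℂˣ) : TEnd cartanB2 dB2 q 0 (piGen (0 : Fin 2) a)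
    = -piGen (0:Fin 2) (a*q^4) + piGen (1:Fin 2) (a*q) + piGen (1:Fin 2) (a*q^3) := by
  rw [TEnd_piGen]
  simp [TGen, cartanB2, dB2, Finset.sum_filter, Fin.sum_univ_two, ← pow_mul]
  abel

lemma T0_pi1 (q a : ℂˣ) : TEnd cartanB2 dB2 q 0 (piGen (1 : Fin 2) a) = piGen (1:Fin 2) a := by
  rw [TEnd_piGen]; simp [TGen]

lemma T1_pi0 (q a : ℂˣ) : TEnd cartanB2 dB2 q 1 (piGen (0 : Fin 2) a) = piGen (0:Fin 2) a := by
  rw [TEnd_piGen]; simp [TGen]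

lemma T1_pi1 (q a : ℂˣ) : TEnd cartanB2 dB2 q 1 (piGen (1 : Fin 2) a)
    = -piGen (1:Fin 2) (a*q^2) + piGen (0:Fin 2) (a*q) := by
  rw [TEnd_piGen]
  simp [TGen, cartanB2, dB2, Finset.sum_filter, Fin.sum_univ_two]

lemma mqq (a q : ℂˣ) (m n : ℕ) : a * q ^ m * q ^ n = a * q ^ (m + n) := by
  rw [mul_assoc, ← pow_add]
lemma mq1 (a q : ℂˣ) (n : ℕ) : a * q * q ^ n = a * q ^ (n + 1) := by
  rw [mul_assoc, ← pow_succ']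
lemma mqn1 (a q : ℂˣ) (n : ℕ) : a * q ^ n * q = a * q ^ (n + 1) := by
  rw [mul_assoc, ← pow_succ]
lemma mq11 (a q : ℂˣ) : a * q * q = a * q ^ 2 := by
  rw [mul_assoc, ← sq]

/-- rank two, type B₂, second chain: for all `a ∈ ℂˣ`,
`T₁(α_{2,a}) = α_{2,a}·α_{1,aq}`,
`T₂(T₁(α_{2,a})) = α_{2,aq⁴}·α_{1,aq}`, and
`T₁(T₂(T₁(α_{2,a}))) = α_{2,aq⁴}` (written additively). -/
theorem lroot_braid_B2_second_chain
    (q : ℂˣ) (hq : ∀ n : ℕ, 1 ≤ n → q ^ n ≠ 1) (a : ℂˣ) :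
    TEnd cartanB2 dB2 q 0 (lroot cartanB2 dB2 q 1 a)
        = lroot cartanB2 dB2 q 1 a + lroot cartanB2 dB2 q 0 (a * q) ∧
    TEnd cartanB2 dB2 q 1 (TEnd cartanB2 dB2 q 0 (lroot cartanB2 dB2 q 1 a))
        = lroot cartanB2 dB2 q 1 (a * q ^ 4) + lroot cartanB2 dB2 q 0 (a * q) ∧
    TEnd cartanB2 dB2 q 0
        (TEnd cartanB2 dB2 q 1 (TEnd cartanB2 dB2 q 0 (lroot cartanB2 dB2 q 1 a)))
        = lroot cartanB2 dB2 q 1 (a * q ^ 4) := by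
  refine ⟨?_, ?_, ?_⟩ <;>
  · simp only [lroot, map_sub, map_add, map_neg, T0_pi0, T0_pi1, T1_pi0, T1_pi1,
      mqq, mq1, mqn1, mq11]
    norm_num
    abel
end

section
/- Assume in addition that there exist positive integers c_j (j ∈ I) with ∑_{j∈I} c_j·a_{ji} > 0 for every i ∈ I (this holds whenever A is a Cartan matrix of finite type). Then 𝒬⁺ ∩ 𝒬⁻ = {1}; consequently the relation ϖ ≼ ϖ′ ⟺ ϖ ∈ ϖ′·𝒬⁻ is a partial order on 𝒫. -/
open Finsupp

/-!
The functional `π_{j,a} ↦ c_j` sends every ℓ-root `α_{i,a}` to `∑_j c_j a_{ji} > 0`, so it is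
strictly positive on `𝒬⁺ \ {1}` and strictly negative on `𝒬⁻ \ {1}`. The same functional rules
out `ϖ, ϖ⁻¹ ∈ 𝒬⁻` for `ϖ ≠ 1`, which is the antisymmetry of `≼`.
-/

namespace AddSubmonoid

section OrderedMonoid

variable {M N : Type*} [AddMonoid M] [AddCommMonoid N] [PartialOrder N]
  [IsOrderedCancelAddMonoid N]

theorem eq_zero_or_pos_of_mem_closure {S : Set M} (f : M →+ N) (hS : ∀ s ∈ S, 0 < f s)
    {x : M} (hx : x ∈ closure S) : x = 0 ∨ 0 < f x := by
  induction hx using closure_induction with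
  | mem s hs => exact .inr (hS s hs)
  | zero => exact .inl rfl
  | add x y _ _ hx hy =>
    rcases hx with rfl | hx
    · simpa using hy
    rcases hy with rfl | hy
    · exact .inr (by simpa using hx)
    exact .inr (by simpa using add_pos hx hy)

end OrderedMonoid

section OrderedGroup

variable {M N : Type*} [AddMonoid M] [AddCommGroup N] [PartialOrder N] [IsOrderedAddMonoid N]

theorem eq_zero_or_neg_of_mem_closure {T : Set M} (f : M →+ N) (hT : ∀ t ∈ T, f t < 0)
    {x : M} (hx : x ∈ closure T) : x = 0 ∨ f x < 0 := by
  simpa using eq_zero_or_pos_of_mem_closure (-f) (by simpa using hT) hx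

theorem eq_zero_of_mem_closure_of_mem_closure {S T : Set M} (f : M →+ N)
    (hS : ∀ s ∈ S, 0 < f s) (hT : ∀ t ∈ T, f t < 0) {x : M} (hxS : x ∈ closure S)
    (hxT : x ∈ closure T) : x = 0 := by
  rcases eq_zero_or_pos_of_mem_closure f hS hxS with hx | hpos
  · exact hx
  rcases eq_zero_or_neg_of_mem_closure f hT hxT with hx | hneg
  · exact hx
  exact absurd hpos hneg.not_gt

theorem eq_zero_of_mem_closure_of_neg_mem_closure {G : Type*} [AddGroup G] {T : Set G}
    (f : G →+ N) (hT : ∀ t ∈ T, f t < 0) {x : G} (hx : x ∈ closure T)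
    (hnx : -x ∈ closure T) : x = 0 := by
  rcases eq_zero_or_neg_of_mem_closure f hT hx with hx | hneg
  · exact hx
  rcases eq_zero_or_neg_of_mem_closure f hT hnx with hnx | hneg'
  · exact neg_eq_zero.mp hnx
  rw [map_neg, neg_lt_zero] at hneg'
  exact absurd hneg hneg'.not_gt

end OrderedGroup

end AddSubmonoid

theorem isPartialOrder_sub_mem {G : Type*} [AddCommGroup G] (Q : AddSubmonoid G)
    (hQ : ∀ x ∈ Q, -x ∈ Q → x = 0) : IsPartialOrder G (fun a b => a - b ∈ Q) where
  refl a := by simp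
  trans a b c hab hbc := by simpa using Q.add_mem hab hbc
  antisymm a b hab hba := sub_eq_zero.mp (hQ _ hab (by simpa using hba))

section WeightedDegree

variable {I : Type*}

noncomputable def weightedDegree (c : I → ℤ) : LWeightLattice I →+ ℤ :=
  Finsupp.liftAddHom fun p => zmultiplesHom ℤ (c p.1)

@[simp]
theorem weightedDegree_piGen (c : I → ℤ) (j : I) (a : ℂˣ) :
    weightedDegree c (piGen j a) = c j := by
  simp [weightedDegree, piGen]

variable [Fintype I] [DecidableEq I]

theorem TEnd_piGen_self (A : I → I → ℤ) (d : I → ℕ) (q : ℂˣ) (i : I) (a : ℂˣ) :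
    TEnd A d q i (piGen i a) = TGen A d q i (i, a) :=
  (liftAddHom_apply_single _ _ _).trans (one_zsmul _)

theorem weightedDegree_lroot (A : I → I → ℤ) (d : I → ℕ) (q : ℂˣ) (c : I → ℤ)
    (hAdiag : ∀ i, A i i = 2) (hAoff : ∀ i j, i ≠ j → A i j ∈ ({0, -1, -2, -3} : Set ℤ))
    (i : I) (a : ℂˣ) :
    weightedDegree c (lroot A d q i a) = ∑ j, c j * A j i := by
  have hT : weightedDegree c (TEnd A d q i (piGen i a)) = -c i + ∑ j,
      ((if A j i = -1 then c j else 0) + (if A j i = -2 then c j + c j else 0)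
        + (if A j i = -3 then c j + c j + c j else 0)) := by
    simp only [TEnd_piGen_self, TGen, if_true, map_add, map_neg, map_sum, weightedDegree_piGen]
    rw [Finset.sum_filter, Finset.sum_filter, Finset.sum_filter, Finset.sum_add_distrib,
      Finset.sum_add_distrib]
    ring
  -- `c_j a_{ji}` plus the contribution of `j` to `T_i π_{i,a}` vanishes unless `j = i`
  have hcol : ∀ j, c j * A j i + ((if A j i = -1 then c j else 0)
      + (if A j i = -2 then c j + c j else 0) + (if A j i = -3 then c j + c j + c j else 0))
        = if j = i then 2 * c j else 0 := by
    intro j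
    by_cases hji : j = i
    · subst hji
      norm_num [hAdiag, mul_comm]
    · obtain h | h | h | h : A j i = 0 ∨ A j i = -1 ∨ A j i = -2 ∨ A j i = -3 := hAoff j i hji
      all_goals simp [h, hji] <;> ring
  have hsum := Finset.sum_congr rfl fun j (_ : j ∈ Finset.univ) => hcol j
  rw [Finset.sum_add_distrib, Finset.sum_ite_eq'] at hsum
  rw [lroot, map_sub, hT, weightedDegree_piGen]
  simp only [Finset.mem_univ, if_true] at hsum
  linarith

end WeightedDegree

theorem Qplus_inter_Qminus_trivial_general
    {I : Type*} [Fintype I] [DecidableEq I]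
    (q : ℂˣ)
    (A : I → I → ℤ) (d : I → ℕ)
    (hAdiag : ∀ i, A i i = 2)
    (hAoff : ∀ i j, i ≠ j → A i j ∈ ({0, -1, -2, -3} : Set ℤ))
    (c : I → ℤ)
    (hpos : ∀ i, 0 < ∑ j, c j * A j i) :
    ((AddSubmonoid.closure (Set.range fun p : I × ℂˣ => lroot A d q p.1 p.2) : Set (LWeightLattice I))
        ∩ (AddSubmonoid.closure (Set.range fun p : I × ℂˣ => -lroot A d q p.1 p.2) : Set (LWeightLattice I))
      = {0}) ∧
    IsPartialOrder (LWeightLattice I)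
      (fun ϖ ϖ' => ϖ - ϖ' ∈
        AddSubmonoid.closure (Set.range fun p : I × ℂˣ => -lroot A d q p.1 p.2)) := by
  have hroot (p : I × ℂˣ) : 0 < weightedDegree c (lroot A d q p.1 p.2) := by
    rw [weightedDegree_lroot A d q c hAdiag hAoff]
    exact hpos p.1
  have hplus : ∀ s ∈ Set.range fun p : I × ℂˣ => lroot A d q p.1 p.2, 0 < weightedDegree c s :=
    Set.forall_mem_range.mpr hroot
  have hminus : ∀ t ∈ Set.range fun p : I × ℂˣ => -lroot A d q p.1 p.2,
      weightedDegree c t < 0 :=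
    Set.forall_mem_range.mpr fun p => by simpa using hroot p
  refine ⟨Set.eq_singleton_iff_unique_mem.mpr ⟨⟨zero_mem _, zero_mem _⟩, ?_⟩,
    isPartialOrder_sub_mem _ fun x hx hnx => ?_⟩
  · rintro x ⟨hxp, hxm⟩
    exact AddSubmonoid.eq_zero_of_mem_closure_of_mem_closure _ hplus hminus hxp hxm
  · exact AddSubmonoid.eq_zero_of_mem_closure_of_neg_mem_closure _ hminus hx hnx

/-- if there are positive integers `c_j` with
`∑_j c_j·a_{ji} > 0` for every `i`, then `𝒬⁺ ∩ 𝒬⁻ = {1}` (written additively,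
`{0}`), and consequently `ϖ ≼ ϖ′ ⟺ ϖ ∈ ϖ′·𝒬⁻` is a partial order on 𝒫. -/
theorem Qplus_inter_Qminus_trivial
    {I : Type*} [Fintype I] [DecidableEq I]
    (q : ℂˣ) (hq : ∀ n : ℕ, 1 ≤ n → q ^ n ≠ 1)
    (A : I → I → ℤ) (d : I → ℕ)
    (hAdiag : ∀ i, A i i = 2)
    (hAoff : ∀ i j, i ≠ j → A i j ∈ ({0, -1, -2, -3} : Set ℤ))
    (hAzero : ∀ i j, A i j = 0 ↔ A j i = 0)
    (hAprod : ∀ i j, i ≠ j → A i j * A j i ≤ 3)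
    (hd : ∀ i, 0 < d i)
    (hsym : ∀ i j, (d i : ℤ) * A i j = (d j : ℤ) * A j i)
    (c : I → ℤ) (hc : ∀ j, 0 < c j)
    (hpos : ∀ i, 0 < ∑ j, c j * A j i) :
    ((AddSubmonoid.closure (Set.range fun p : I × ℂˣ => lroot A d q p.1 p.2) : Set (LWeightLattice I))
        ∩ (AddSubmonoid.closure (Set.range fun p : I × ℂˣ => -lroot A d q p.1 p.2) : Set (LWeightLattice I))
      = {0}) ∧
    IsPartialOrder (LWeightLattice I)
      (fun ϖ ϖ' => ϖ - ϖ' ∈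
        AddSubmonoid.closure (Set.range fun p : I × ℂˣ => -lroot A d q p.1 p.2)) :=
  Qplus_inter_Qminus_trivial_general q A d hAdiag hAoff c hpos
end
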